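/- With the structures as in the standard setup and θₐ := φₐφ - ξₐ⊗η, one has -θₐθₐ₊₁ + (φξₐ)⊗(ηₐ₊₁∘φ) = φₐ₊₂ = θₐ₊₁θₐ - (φξₐ₊₁)⊗(ηₐ∘φ) (indices mod 3), i.e. for all X: -θₐθₐ₊₁X + ηₐ₊₁(φX)φξₐ = φₐ₊₂X. -/

import Mathlib

open RealInnerProductSpace

/-- Pointwise setup on a real inner product space: an almost contact metric
structure `(φ, ξ, η)` together with an almost contact metric 3-structure
`(φₐ, ξₐ, ηₐ)`, `a ∈ ZMod 3`, satisfying the quaternionic contact relations and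
the compatibility relations coming from `JJₐ = JₐJ`.  Here `η x = ⟪x, ξ⟫` and
`ηₐ x = ⟪x, ξₐ⟫`. -/
structure ContactSetup (V : Type*) [NormedAddCommGroup V] [InnerProductSpace ℝ V] where
  φ : V →ₗ[ℝ] V
  ξ : V
  φa : ZMod 3 → (V →ₗ[ℝ] V)
  ξa : ZMod 3 → V
  φ_sq : ∀ x, φ (φ x) = -x + ⟪x, ξ⟫ • ξ
  ξ_unit : ⟪ξ, ξ⟫ = 1
  φ_ξ : φ ξ = 0
  φ_metric : ∀ x y, ⟪φ x, φ y⟫ = ⟪x, y⟫ - ⟪x, ξ⟫ * ⟪y, ξ⟫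
  φa_sq : ∀ a x, φa a (φa a x) = -x + ⟪x, ξa a⟫ • ξa a
  ξa_unit : ∀ a, ⟪ξa a, ξa a⟫ = 1
  φa_ξa : ∀ a, φa a (ξa a) = 0
  φa_metric : ∀ a x y, ⟪φa a x, φa a y⟫ = ⟪x, y⟫ - ⟪x, ξa a⟫ * ⟪y, ξa a⟫
  quat₁ : ∀ a x, φa a (φa (a + 1) x) - ⟪x, ξa (a + 1)⟫ • ξa a = φa (a + 2) x
  quat₂ : ∀ a x, φa (a + 2) x = -(φa (a + 1) (φa a x)) + ⟪x, ξa a⟫ • ξa (a + 1)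
  quat_ξ₁ : ∀ a, φa a (ξa (a + 1)) = ξa (a + 2)
  quat_ξ₂ : ∀ a, ξa (a + 2) = -(φa (a + 1) (ξa a))
  inter : ∀ a x, φa a (φ x) - ⟪x, ξ⟫ • ξa a = φ (φa a x) - ⟪x, ξa a⟫ • ξ
  inter_ξ : ∀ a, φ (ξa a) = φa a ξ

/-- The local symmetric tensor `θₐ := φₐφ - ξₐ ⊗ η`. -/
def ContactSetup.θa {V : Type*} [NormedAddCommGroup V] [InnerProductSpace ℝ V]
    (S : ContactSetup V) (a : ZMod 3) (x : V) : V :=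
  S.φa a (S.φ x) - ⟪x, S.ξ⟫ • S.ξa a

/-!
The compatibility relation rewrites `θ_b` as `φφ_b - ξ ⊗ η_b`. Since `η ∘ φ = 0`, this gives
`η ∘ θ_b = -η_b` and `φθ_b = -φ_b + ξ ⊗ (η_b ∘ φ)`, hence for all `b, c`
`θ_cθ_b = -φ_cφ_b + φ_cξ ⊗ (η_b ∘ φ) + ξ_c ⊗ η_b`.
With `φ_cξ = φξ_c`, the two quaternionic relations for `φ_{a+2}` give the two identities.
-/

theorem apply_map_eq_zero_of_map_map_eq_neg_add_smul {R M : Type*} [Ring R] [AddCommGroup M]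
    [Module R M] [NoZeroSMulDivisors R M] {f : M →ₗ[R] M} {η : M → R} {v : M}
    (hsq : ∀ x, f (f x) = -x + η x • v) (hfv : f v = 0) (hv : v ≠ 0) (x : M) :
    η (f x) = 0 := by
  have hcube : f (f (f x)) = -f x := by rw [hsq x]; simp [hfv]
  have h : η (f x) • v = 0 := left_eq_add.mp (hcube ▸ hsq (f x))
  exact (eq_zero_or_eq_zero_of_smul_eq_zero h).resolve_right hv

namespace ContactSetup

variable {V : Type*} [NormedAddCommGroup V] [InnerProductSpace ℝ V] (S : ContactSetup V)

theorem ξ_ne_zero : S.ξ ≠ 0 := by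
  rintro h
  simpa [h] using S.ξ_unit

theorem inner_φ_ξ (x : V) : ⟪S.φ x, S.ξ⟫ = 0 :=
  apply_map_eq_zero_of_map_map_eq_neg_add_smul S.φ_sq S.φ_ξ S.ξ_ne_zero x

theorem θa_eq (b : ZMod 3) (x : V) : S.θa b x = S.φ (S.φa b x) - ⟪x, S.ξa b⟫ • S.ξ :=
  S.inter b x

theorem inner_θa_ξ (b : ZMod 3) (x : V) : ⟪S.θa b x, S.ξ⟫ = -⟪x, S.ξa b⟫ := by
  rw [θa_eq, inner_sub_left, inner_φ_ξ, real_inner_smul_left, S.ξ_unit]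
  ring

theorem φ_θa (b : ZMod 3) (x : V) :
    S.φ (S.θa b x) = -S.φa b x + ⟪S.φ x, S.ξa b⟫ • S.ξ := by
  have h := S.inter b (S.φ x)
  rw [inner_φ_ξ, zero_smul, sub_zero, S.φ_sq, map_add, map_neg, map_smul] at h
  rw [θa, map_sub, map_smul, S.inter_ξ]
  linear_combination (norm := module) -h

theorem θa_θa (b c : ZMod 3) (x : V) :
    S.θa c (S.θa b x) =
      -S.φa c (S.φa b x) + ⟪S.φ x, S.ξa b⟫ • S.φa c S.ξ + ⟪x, S.ξa b⟫ • S.ξa c := by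
  rw [θa, φ_θa, inner_θa_ξ, map_add, map_neg, map_smul]
  module

end ContactSetup

/-- `-θₐθₐ₊₁ + (φξₐ)⊗(ηₐ₊₁∘φ) = φₐ₊₂ = θₐ₊₁θₐ - (φξₐ₊₁)⊗(ηₐ∘φ)`. -/
theorem theta_a_theta_a1 {V : Type*} [NormedAddCommGroup V] [InnerProductSpace ℝ V]
    (S : ContactSetup V) (a : ZMod 3) (x : V) :
    -(S.θa a (S.θa (a + 1) x)) + ⟪S.φ x, S.ξa (a + 1)⟫ • S.φ (S.ξa a) = S.φa (a + 2) x ∧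
    S.φa (a + 2) x = S.θa (a + 1) (S.θa a x) - ⟪S.φ x, S.ξa a⟫ • S.φ (S.ξa (a + 1)) := by
  constructor
  · rw [S.θa_θa (a + 1) a, S.inter_ξ, ← S.quat₁ a x]
    module
  · rw [S.θa_θa a (a + 1), S.inter_ξ, S.quat₂ a x]
    module
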